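/- arXiv:0711.3200 — 4 statements merged into one kernel-verified Lean document; each statement's English description precedes it below -/
import Mathlib

section
/- If a group homomorphism f : G → H is such that its equivalence class modulo inner automorphisms is invertible in the quotient category (i.e., there exists g : H → G with g ∘ f equal to an inner automorphism of G and f ∘ g equal to an inner automorphism of H), then f itself is a group isomorphism. -/
namespace MonoidHom

variable {M N P : Type*} [MulOneClass M] [MulOneClass N] [MulOneClass P]

theorem injective_of_comp_eq_mulEquiv {f : M →* N} {g : N →* P} (e : M ≃* P)
    (h : g.comp f = e.toMonoidHom) : Function.Injective f :=
  Function.Injective.of_comp (f := g) <| by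
    rw [← coe_comp, h]
    exact e.injective

theorem surjective_of_comp_eq_mulEquiv {f : M →* N} {g : N →* P} (e : M ≃* P)
    (h : g.comp f = e.toMonoidHom) : Function.Surjective g :=
  Function.Surjective.of_comp (g := f) <| by
    rw [← coe_comp, h]
    exact e.surjective

end MonoidHom

theorem invertible_mod_inner_implies_isomorphism {G H : Type*} [Group G] [Group H]
    (f : G →* H) (g : H →* G) (a : G) (b : H)
    (hgf : g.comp f = ((MulAut.conj a : G ≃* G)).toMonoidHom)
    (hfg : f.comp g = ((MulAut.conj b : H ≃* H)).toMonoidHom) :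
    Function.Bijective f :=
  ⟨MonoidHom.injective_of_comp_eq_mulEquiv _ hgf,
    MonoidHom.surjective_of_comp_eq_mulEquiv _ hfg⟩
end

section
/- There exists an automorphism of the alternating group A₆ that maps the 3-cycle (1 2 3) to the product (1 2 3)(4 5 6) of two disjoint 3-cycles; in particular, this automorphism is not induced by conjugation by any element of the symmetric group S₆. -/
/-!
A syntheme is a partition of `Fin 6` into three pairs, i.e. a fixed-point-free involution, and a
(synthematic) total is a set of five synthemes covering all fifteen pairs. There are exactly six
totals, and conjugation permutes them, which gives a homomorphism `Perm (Fin 6) →* Perm (Fin 6)`.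
It is onto, since the unique syntheme shared by two totals swaps them and leaves the other four
fixed, so it is an automorphism of `S₆`; it restricts to `A₆`, a characteristic subgroup. A
3-cycle fixes no total, so its image is a product of two disjoint 3-cycles, which no
conjugation can produce.
-/

open Equiv Equiv.Perm ConjAct Pointwise Function

section Monoid

variable {M α ι : Type*} [Monoid M] [MulAction M α] {T : ι → α}

theorem exists_smul_eq_of_mclosure_eq_top {s : Set M} (hs : Submonoid.closure s = ⊤)
    (h : ∀ m ∈ s, ∀ i, ∃ j, m • T i = T j) (m : M) (i : ι) : ∃ j, m • T i = T j := by
  have hm : m ∈ Submonoid.closure s := hs ▸ Submonoid.mem_top m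
  induction hm using Submonoid.closure_induction generalizing i with
  | mem m hm => exact h m hm i
  | one => exact ⟨i, one_smul M (T i)⟩
  | mul m n _ _ ihm ihn =>
    obtain ⟨j, hj⟩ := ihn i
    obtain ⟨k, hk⟩ := ihm j
    exact ⟨k, by rw [mul_smul, hj, hk]⟩

noncomputable abbrev actionOfInvariantRange (hT : Injective T)
    (h : ∀ (m : M) i, ∃ j, m • T i = T j) : MulAction M ι where
  smul m i := (h m i).choose
  one_smul i := hT <| by
    change T (h 1 i).choose = T i
    rw [← (h 1 i).choose_spec, one_smul]
  mul_smul m n i := hT <| by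
    change T (h _ i).choose = T (h m (h n i).choose).choose
    rw [← (h _ i).choose_spec, ← (h m _).choose_spec, ← (h n i).choose_spec, mul_smul]

end Monoid

section Group

variable {M α ι : Type*} [Group M] [MulAction M α] {T : ι → α}

noncomputable def permHomOfInvariantRange (hT : Injective T)
    (h : ∀ (m : M) i, ∃ j, m • T i = T j) : M →* Perm ι :=
  letI := actionOfInvariantRange hT h
  MulAction.toPermHom M ι

theorem apply_permHomOfInvariantRange_apply (hT : Injective T)
    (h : ∀ (m : M) i, ∃ j, m • T i = T j) (m : M) (i : ι) :
    T (permHomOfInvariantRange hT h m i) = m • T i :=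
  (h m i).choose_spec.symm

theorem permHomOfInvariantRange_eq_iff (hT : Injective T)
    (h : ∀ (m : M) i, ∃ j, m • T i = T j) (m : M) (τ : Perm ι) :
    permHomOfInvariantRange hT h m = τ ↔ ∀ i, m • T i = T (τ i) := by
  simp only [Perm.ext_iff, ← hT.eq_iff, apply_permHomOfInvariantRange_apply]

end Group

def syntheme (a b c d e f : Fin 6) : Perm (Fin 6) := swap a b * swap c d * swap e f

-- Labelled so that `c[0, 1, 2]` acts on the totals as `c[0, 1, 2] * c[3, 4, 5]`.
def totals : Fin 6 → Finset (Perm (Fin 6)) :=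
  ![{syntheme 0 1 2 3 4 5, syntheme 0 2 1 4 3 5, syntheme 0 3 1 5 2 4, syntheme 0 4 1 3 2 5,
      syntheme 0 5 1 2 3 4},
    {syntheme 0 1 2 4 3 5, syntheme 0 2 1 5 3 4, syntheme 0 3 1 2 4 5, syntheme 0 4 1 3 2 5,
      syntheme 0 5 1 4 2 3},
    {syntheme 0 1 2 5 3 4, syntheme 0 2 1 3 4 5, syntheme 0 3 1 5 2 4, syntheme 0 4 1 2 3 5,
      syntheme 0 5 1 4 2 3},
    {syntheme 0 1 2 3 4 5, syntheme 0 2 1 5 3 4, syntheme 0 3 1 4 2 5, syntheme 0 4 1 2 3 5,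
      syntheme 0 5 1 3 2 4},
    {syntheme 0 1 2 5 3 4, syntheme 0 2 1 4 3 5, syntheme 0 3 1 2 4 5, syntheme 0 4 1 5 2 3,
      syntheme 0 5 1 3 2 4},
    {syntheme 0 1 2 4 3 5, syntheme 0 2 1 3 4 5, syntheme 0 3 1 4 2 5, syntheme 0 4 1 5 2 3,
      syntheme 0 5 1 2 3 4}]

theorem totals_injective : Injective totals := by decide

theorem exists_conj_totals_eq (σ : ConjAct (Perm (Fin 6))) (i : Fin 6) :
    ∃ j, σ • totals i = totals j := by
  have hgen : Submonoid.closure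
      (toConjAct '' Set.range fun k : Fin 5 ↦ swap k.castSucc k.succ) = ⊤ := by
    rw [← MonoidHom.map_mclosure, mclosure_swap_castSucc_succ, ← MonoidHom.mrange_eq_map,
      MonoidHom.mrange_eq_top]
    exact toConjAct.surjective
  refine exists_smul_eq_of_mclosure_eq_top hgen ?_ σ i
  simp only [Set.forall_mem_image, Set.forall_mem_range]
  decide

noncomputable def totalsPermHom : Perm (Fin 6) →* Perm (Fin 6) :=
  (permHomOfInvariantRange (M := ConjAct (Perm (Fin 6))) totals_injective
    exists_conj_totals_eq).comp toConjAct.toMonoidHom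

theorem totalsPermHom_eq_iff (σ τ : Perm (Fin 6)) :
    totalsPermHom σ = τ ↔ ∀ i, toConjAct σ • totals i = totals (τ i) :=
  permHomOfInvariantRange_eq_iff totals_injective exists_conj_totals_eq (toConjAct σ) τ

theorem totalsPermHom_surjective : Surjective totalsPermHom := by
  rw [← MonoidHom.mrange_eq_top, eq_top_iff, ← mclosure_swap_castSucc_succ, Submonoid.closure_le]
  rintro _ ⟨k, rfl⟩
  -- the `k`-th witness is the syntheme shared by the totals `k` and `k + 1`
  have hpre : ∀ k : Fin 5, totalsPermHom (![syntheme 0 4 1 3 2 5, syntheme 0 5 1 4 2 3,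
      syntheme 0 4 1 2 3 5, syntheme 0 5 1 3 2 4, syntheme 0 4 1 5 2 3] k) =
      swap k.castSucc k.succ := by
    simp only [totalsPermHom_eq_iff]
    decide
  exact ⟨_, hpre k⟩

noncomputable def totalsAut : MulAut (Perm (Fin 6)) :=
  MulEquiv.ofBijective totalsPermHom
    ⟨Finite.injective_iff_surjective.mpr totalsPermHom_surjective, totalsPermHom_surjective⟩

theorem totalsAut_threeCycle : totalsAut c[0, 1, 2] = c[0, 1, 2] * c[3, 4, 5] :=
  (totalsPermHom_eq_iff c[0, 1, 2] (c[0, 1, 2] * c[3, 4, 5])).mpr (by decide)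

theorem exists_exceptional_automorphism_A6
    (h1 : (c[0, 1, 2] : Perm (Fin 6)) ∈ alternatingGroup (Fin 6))
    (h2 : (c[0, 1, 2] * c[3, 4, 5] : Perm (Fin 6)) ∈ alternatingGroup (Fin 6)) :
    ∃ φ : MulAut (alternatingGroup (Fin 6)),
      φ ⟨c[0, 1, 2], h1⟩ = ⟨c[0, 1, 2] * c[3, 4, 5], h2⟩ ∧
      ∀ g : Perm (Fin 6),
        ¬ ∀ x : alternatingGroup (Fin 6), (↑(φ x) : Perm (Fin 6)) = g * ↑x * g⁻¹ := by
  refine ⟨MulAut.characteristic _ totalsAut, Subtype.ext totalsAut_threeCycle, fun g hg ↦ ?_⟩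
  have hconj : c[0, 1, 2] * c[3, 4, 5] = g * c[0, 1, 2] * g⁻¹ :=
    totalsAut_threeCycle.symm.trans (hg ⟨c[0, 1, 2], h1⟩)
  have hcard := card_support_conj (σ := g) (τ := (c[0, 1, 2] : Perm (Fin 6)))
  rw [← hconj] at hcard
  exact absurd hcard (by decide)
end

section
/- Let C be a category with a compatible family of normal subgroups N(a) ⊴ Aut(a) (i.e., for every f : a → b and φ ∈ N(a) there is ψ ∈ N(b) with φ ≫ f = f ≫ ψ). Define f ~ g for f, g : a → b iff g = φ ≫ f ≫ ψ for some φ ∈ N(a), ψ ∈ N(b). Then ~ is an equivalence relation compatible with composition (the composite of equivalence classes is a single class), the quotient C^out is a category, and the quotient functor C → C^out reflects isomorphisms: if the image of f is an isomorphism in C^out, then f is an isomorphism in C. -/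
/-!
Since each `N a` is a subgroup, composing the automorphisms on either side shows that `~` is an
equivalence relation. For `f₁ ≫ g₁ ~ f₂ ≫ g₂`, the automorphisms trapped between `f₁` and `g₁`
multiply to an element of `N b`, which compatibility pushes past `g₁` into `N c`.
If `f ≫ g ~ 𝟙` and `g ≫ f ~ 𝟙`, then `f ≫ g` and `g ≫ f` differ from identities by
automorphisms, so they are isomorphisms; hence `f` is split mono and split epi.
-/

open CategoryTheory

/-- Equivalence of morphisms modulo a family of subgroups of inner automorphisms. -/
def innerRel {C : Type*} [Category C] (N : ∀ a : C, Subgroup (Aut a))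
    {a b : C} (f g : a ⟶ b) : Prop :=
  ∃ φ ∈ N a, ∃ ψ ∈ N b, g = φ.hom ≫ f ≫ ψ.hom

namespace CategoryTheory.Aut

variable {C : Type*} [Category C] {X : C}

@[simp]
theorem one_hom : (1 : Aut X).hom = 𝟙 X := rfl

@[simp]
theorem mul_hom (φ ψ : Aut X) : (φ * ψ).hom = ψ.hom ≫ φ.hom := rfl

instance isIso_hom (φ : Aut X) : IsIso φ.hom := Iso.isIso_hom φ

@[simp]
theorem inv_hom (φ : Aut X) : φ⁻¹.hom = inv φ.hom :=
  (IsIso.inv_eq_of_hom_inv_id (Iso.hom_inv_id φ)).symm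

end CategoryTheory.Aut

theorem isIso_of_isIso_comp_of_isIso_comp {C : Type*} [Category C] {a b : C}
    (f : a ⟶ b) (g : b ⟶ a) [IsIso (f ≫ g)] [IsIso (g ≫ f)] : IsIso f :=
  have : IsSplitMono f := .mk' ⟨g ≫ inv (f ≫ g), by rw [← Category.assoc, IsIso.hom_inv_id]⟩
  have : IsSplitEpi f := .mk' ⟨inv (g ≫ f) ≫ g, by rw [Category.assoc, IsIso.inv_hom_id]⟩
  isIso_of_mono_of_isSplitEpi f

section innerRel

variable {C : Type*} [Category C] (N : ∀ a : C, Subgroup (Aut a)) {a b c : C}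

theorem innerRel_refl (f : a ⟶ b) : innerRel N f f :=
  ⟨1, (N a).one_mem, 1, (N b).one_mem, by simp⟩

variable {N}

theorem innerRel.symm {f g : a ⟶ b} : innerRel N f g → innerRel N g f := by
  rintro ⟨φ, hφ, ψ, hψ, rfl⟩
  exact ⟨φ⁻¹, inv_mem hφ, ψ⁻¹, inv_mem hψ, by simp⟩

theorem innerRel.trans {f g h : a ⟶ b} : innerRel N f g → innerRel N g h → innerRel N f h := by
  rintro ⟨φ, hφ, ψ, hψ, rfl⟩ ⟨φ', hφ', ψ', hψ', rfl⟩
  exact ⟨φ * φ', mul_mem hφ hφ', ψ' * ψ, mul_mem hψ' hψ, by simp⟩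

theorem equivalence_innerRel (a b : C) : Equivalence (innerRel N (a := a) (b := b)) :=
  ⟨innerRel_refl N, innerRel.symm, innerRel.trans⟩

theorem innerRel.comp
    (hcompat : ∀ {a b : C} (f : a ⟶ b), ∀ φ ∈ N a, ∃ ψ ∈ N b, φ.hom ≫ f = f ≫ ψ.hom)
    {f₁ f₂ : a ⟶ b} {g₁ g₂ : b ⟶ c} :
    innerRel N f₁ f₂ → innerRel N g₁ g₂ → innerRel N (f₁ ≫ g₁) (f₂ ≫ g₂) := by
  rintro ⟨φ, hφ, ψ, hψ, rfl⟩ ⟨φ', hφ', ψ', hψ', rfl⟩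
  obtain ⟨ρ, hρ, hpush⟩ := hcompat g₁ (φ' * ψ) (mul_mem hφ' hψ)
  refine ⟨φ, hφ, ψ' * ρ, mul_mem hψ' hρ, ?_⟩
  simp only [Aut.mul_hom, Category.assoc] at hpush ⊢
  rw [reassoc_of% hpush]

theorem isIso_of_innerRel {f g : a ⟶ b} (h : innerRel N f g) [IsIso g] : IsIso f := by
  obtain ⟨φ, -, ψ, -, rfl⟩ := h.symm
  infer_instance

end innerRel

theorem quotient_by_inner_automorphisms_is_category_and_reflects_isos_general
    {C : Type*} [Category C] (N : ∀ a : C, Subgroup (Aut a))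
    (hcompat : ∀ {a b : C} (f : a ⟶ b), ∀ φ ∈ N a,
      ∃ ψ ∈ N b, φ.hom ≫ f = f ≫ ψ.hom) :
    (∀ a b : C, Equivalence (innerRel N (a := a) (b := b))) ∧
    (∀ {a b c : C} (f₁ f₂ : a ⟶ b) (g₁ g₂ : b ⟶ c),
      innerRel N f₁ f₂ → innerRel N g₁ g₂ → innerRel N (f₁ ≫ g₁) (f₂ ≫ g₂)) ∧
    (∀ {a b : C} (f : a ⟶ b),
      (∃ g : b ⟶ a, innerRel N (f ≫ g) (𝟙 a) ∧ innerRel N (g ≫ f) (𝟙 b)) →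
      IsIso f) := by
  refine ⟨equivalence_innerRel, fun _ _ _ _ => innerRel.comp hcompat, ?_⟩
  rintro a b f ⟨g, hfg, hgf⟩
  have := isIso_of_innerRel hfg
  have := isIso_of_innerRel hgf
  exact isIso_of_isIso_comp_of_isIso_comp f g

theorem quotient_by_inner_automorphisms_is_category_and_reflects_isos
    {C : Type*} [Category C] (N : ∀ a : C, Subgroup (Aut a))
    (hnormal : ∀ a : C, (N a).Normal)
    (hcompat : ∀ {a b : C} (f : a ⟶ b), ∀ φ ∈ N a,
      ∃ ψ ∈ N b, φ.hom ≫ f = f ≫ ψ.hom) :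
    (∀ a b : C, Equivalence (innerRel N (a := a) (b := b))) ∧
    (∀ {a b c : C} (f₁ f₂ : a ⟶ b) (g₁ g₂ : b ⟶ c),
      innerRel N f₁ f₂ → innerRel N g₁ g₂ → innerRel N (f₁ ≫ g₁) (f₂ ≫ g₂)) ∧
    (∀ {a b : C} (f : a ⟶ b),
      (∃ g : b ⟶ a, innerRel N (f ≫ g) (𝟙 a) ∧ innerRel N (g ≫ f) (𝟙 b)) →
      IsIso f) :=
  quotient_by_inner_automorphisms_is_category_and_reflects_isos_general N hcompat
end

section
/- Let C be a category whose Hom-sets carry metrics such that composition is jointly continuous, equipped with a compatible family of normal subgroups of inner automorphisms. Then the closure of an equivalence class (modulo inner automorphisms) of a morphism, the product of the closures of two equivalence classes being defined as the closure of their setwise product, yields an associative composition; i.e., for morphisms f : a → b, g : b → c, h : c → d, the closure of (cl[f] · cl[g]) · cl[h] equals the closure of cl[f] · (cl[g] · cl[h]), both equal to the closure of the equivalence class of f ≫ g ≫ h. -/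
open CategoryTheory

/-- The equivalence class of a morphism modulo the given inner automorphism
subgroups. -/
def innerClass {C : Type*} [Category C] (N : ∀ a : C, Subgroup (Aut a))
    {a b : C} (f : a ⟶ b) : Set (a ⟶ b) :=
  {x | ∃ φ ∈ N a, ∃ ψ ∈ N b, x = φ.hom ≫ f ≫ ψ.hom}

/-! Inner classes multiply exactly: `[f] · [g] = [f ≫ g]`, because compatibility lets the inner
automorphisms between `f` and `g` be pushed past `g`. Joint continuity of composition makes
closure commute with this product, so either bracketing of `cl[f] · cl[g] · cl[h]` is
`cl[f ≫ g ≫ h]`. -/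

open Set Function

theorem closure_image2_closure_closure {α β γ : Type*} [TopologicalSpace α]
    [TopologicalSpace β] [TopologicalSpace γ] {f : α → β → γ} (hf : Continuous (uncurry f))
    (s : Set α) (t : Set β) :
    closure (image2 f (closure s) (closure t)) = closure (image2 f s t) :=
  (closure_minimal
      (image2_subset_iff.2 fun _ hx _ hy ↦
        map_mem_closure₂ hf hx hy fun _ ha _ hb ↦ mem_image2_of_mem ha hb)
      isClosed_closure).antisymm
    (closure_mono (image2_subset subset_closure subset_closure))

section InnerClass

variable {C : Type*} [Category C] {N : ∀ a : C, Subgroup (Aut a)}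

theorem image2_comp_innerClass
    (hcompat : ∀ {a b : C} (f : a ⟶ b), ∀ φ ∈ N a, ∃ ψ ∈ N b, φ.hom ≫ f = f ≫ ψ.hom)
    {a b c : C} (f : a ⟶ b) (g : b ⟶ c) :
    image2 (· ≫ ·) (innerClass N f) (innerClass N g) = innerClass N (f ≫ g) := by
  ext x
  constructor
  · rintro ⟨_, ⟨φ, hφ, ψ, hψ, rfl⟩, _, ⟨φ', hφ', ψ', hψ', rfl⟩, rfl⟩
    -- the inner automorphism `ψ.hom ≫ φ'.hom` sitting between `f` and `g` is pushed past `g`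
    obtain ⟨χ, hχ, hpush⟩ := hcompat g (φ' * ψ) (mul_mem hφ' hψ)
    refine ⟨φ, hφ, ψ' * χ, mul_mem hψ' hχ, ?_⟩
    replace hpush : ψ.hom ≫ φ'.hom ≫ g = g ≫ χ.hom := by rw [← Category.assoc]; exact hpush
    simp only [Aut.Aut_mul_def, Category.assoc]
    rw [reassoc_of% hpush]
    rfl
  · rintro ⟨φ, hφ, ψ, hψ, rfl⟩
    refine ⟨φ.hom ≫ f, ⟨φ, hφ, 1, one_mem _, ?_⟩, g ≫ ψ.hom, ⟨1, one_mem _, ψ, hψ, ?_⟩, ?_⟩ <;>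
      simp [show ∀ x : C, (1 : Aut x).hom = 𝟙 x from fun _ ↦ rfl]

theorem closure_image2_comp_closure_innerClass [∀ x y : C, TopologicalSpace (x ⟶ y)] {a b c : C}
    (hcomp : Continuous fun p : (a ⟶ b) × (b ⟶ c) ↦ p.1 ≫ p.2)
    (hcompat : ∀ {a b : C} (f : a ⟶ b), ∀ φ ∈ N a, ∃ ψ ∈ N b, φ.hom ≫ f = f ≫ ψ.hom)
    (f : a ⟶ b) (g : b ⟶ c) :
    closure (image2 (· ≫ ·) (closure (innerClass N f)) (closure (innerClass N g)))
      = closure (innerClass N (f ≫ g)) := by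
  rw [closure_image2_closure_closure hcomp, image2_comp_innerClass hcompat]

end InnerClass

open CategoryTheory in
theorem closures_of_inner_classes_compose_associatively
    {C : Type*} [Category C]
    [∀ x y : C, TopologicalSpace (x ⟶ y)]
    (hcomp : ∀ x y z : C,
      Continuous (fun p : (x ⟶ y) × (y ⟶ z) => p.1 ≫ p.2))
    (N : ∀ a : C, Subgroup (Aut a))
    (hnormal : ∀ a : C, (N a).Normal)
    (hcompat : ∀ {a b : C} (f : a ⟶ b), ∀ φ ∈ N a,
      ∃ ψ ∈ N b, φ.hom ≫ f = f ≫ ψ.hom)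
    {a b c d : C} (f : a ⟶ b) (g : b ⟶ c) (h : c ⟶ d) :
    closure (Set.image2 (· ≫ ·)
        (closure (Set.image2 (· ≫ ·) (closure (innerClass N f))
          (closure (innerClass N g))))
        (closure (innerClass N h)))
      = closure (Set.image2 (· ≫ ·) (closure (innerClass N f))
          (closure (Set.image2 (· ≫ ·) (closure (innerClass N g))
            (closure (innerClass N h))))) ∧
    closure (Set.image2 (· ≫ ·)
        (closure (Set.image2 (· ≫ ·) (closure (innerClass N f))
          (closure (innerClass N g))))
        (closure (innerClass N h)))
      = closure (innerClass N (f ≫ g ≫ h)) := by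
  have closure_comp {x y z : C} (p : x ⟶ y) (q : y ⟶ z) :=
    closure_image2_comp_closure_innerClass (hcomp x y z) hcompat p q
  have left_assoc : closure (image2 (· ≫ ·)
        (closure (image2 (· ≫ ·) (closure (innerClass N f)) (closure (innerClass N g))))
        (closure (innerClass N h))) = closure (innerClass N (f ≫ g ≫ h)) := by
    rw [closure_comp f g, closure_comp (f ≫ g) h, Category.assoc]
  refine ⟨?_, left_assoc⟩
  rw [left_assoc, closure_comp g h, closure_comp f (g ≫ h)]
end
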